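/- Fix an integer L ≥ 4 divisible by 4, a real C > 0 and an integer p ≥ 1 with C/√p ≤ π. If a configuration φ is such that every bond (x,y) in E₂₃ satisfies dist(φ_x, φ_y) ≥ C/√p, then H_{p,J}(φ) ≥ −J·L²·(1 + exp(−C²/4)) for every J > 0; in particular exp(−β H_{p,J}(φ)) ≤ exp(βJ·L²·(1 + exp(−C²/4))) for every β ≥ 0. -/

import Mathlib

/-!
A bond weight `((1 + cos θ) / 2) ^ p = cos (θ / 2) ^ (2 * p)` is at most `1`, and since
`cos x ≤ exp (-x² / 2)` for `|x| ≤ π / 2` it is at most `exp (-p θ² / 4) ≤ exp (-C² / 4)` when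
`|θ| ≥ C / √p`. Translation by `(2, 0)` shifts `(x₁ + x₂) mod 4` by `2`, so it exchanges the sites
of `E₀₁` and `E₂₃`; pairing every site with its translate, the two bonds of one site of each
pair weigh at most `2` and those of the other at most `2 exp (-C² / 4)`.
-/

open MeasureTheory Real

/-- The site space: the discrete torus of side `L`. -/
abbrev Torus (L : ℕ) := ZMod L × ZMod L

/-- A configuration of the non-linear model: one spin in the circle `ℝ/2πℤ` per site. -/
abbrev NLConfig (L : ℕ) := Torus L → AddCircle (2 * Real.pi)

/-- The two unit coordinate vectors `e₁ = (1,0)` and `e₂ = (0,1)`. -/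
def coordVec (L : ℕ) : Fin 2 → Torus L
  | 0 => (1, 0)
  | 1 => (0, 1)

instance : Fact ((0 : ℝ) < 2 * Real.pi) := ⟨by positivity⟩

/-- The product of normalized Haar measures on the spins. -/
noncomputable def nlMeasure (L : ℕ) [NeZero L] : Measure (NLConfig L) :=
  Measure.pi fun _ => (AddCircle.haarAddCircle : Measure (AddCircle (2 * Real.pi)))

/-- The non-linear Hamiltonian
`H_{p,J}(φ) = −J·Σ_{bonds (x,y)} ((1 + cos(φ_x − φ_y))/2)^p`. -/
noncomputable def nlH (L : ℕ) [NeZero L] (p : ℕ) (J : ℝ) (φ : NLConfig L) : ℝ :=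
  -J * ∑ x : Torus L, ∑ i : Fin 2,
    ((1 + Real.Angle.cos (φ x - φ (x + coordVec L i))) / 2) ^ p

/-- The non-linear model partition function. -/
noncomputable def nlZ (L : ℕ) [NeZero L] (β J : ℝ) (p : ℕ) : ℝ :=
  ∫ φ, Real.exp (-β * nlH L p J φ) ∂(nlMeasure L)

/-- The residue `(x₁ + x₂) mod 4` of a site of the torus, well defined when `4 ∣ L`. -/
def residue4 (L : ℕ) (h : (4 : ℕ) ∣ L) (x : Torus L) : ZMod 4 :=
  ZMod.castHom h (ZMod 4) (x.1 + x.2)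

/-- A bond `(x, x + eᵢ)` belongs to `E₀₁` iff `(x₁ + x₂) mod 4 ∈ {0, 1}`;
`E₂₃` consists of the remaining bonds. -/
def InE01 (L : ℕ) (h : (4 : ℕ) ∣ L) (x : Torus L) : Prop :=
  residue4 L h x = 0 ∨ residue4 L h x = 1

namespace Real

lemma cos_le_exp_neg_sq_div_two {x : ℝ} (hx : |x| ≤ π / 2) : cos x ≤ exp (-x ^ 2 / 2) := by
  rw [← cos_abs, ← sq_abs]
  set y := |x|
  have hy : y ∈ Set.Icc 0 (π / 2) := ⟨abs_nonneg x, hx⟩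
  -- `cos y · exp (y²/2)` decreases on `[0, π/2]` because `y cos y ≤ sin y` there.
  have hanti : AntitoneOn (fun y => cos y * exp (y ^ 2 / 2)) (Set.Icc 0 (π / 2)) := by
    refine antitoneOn_of_deriv_nonpos (convex_Icc _ _) (by fun_prop) (by fun_prop) ?_
    intro z hz
    rw [interior_Icc] at hz
    have hcos : 0 < cos z := cos_pos_of_mem_Ioo ⟨by linarith [hz.1, pi_pos], hz.2⟩
    have htan : z ≤ sin z / cos z := tan_eq_sin_div_cos z ▸ le_tan hz.1.le hz.2
    have hderiv : deriv (fun y => cos y * exp (y ^ 2 / 2)) z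
        = (z * cos z - sin z) * exp (z ^ 2 / 2) := by
      have := (hasDerivAt_cos z).mul (((hasDerivAt_pow 2 z).div_const 2).exp)
      rw [show (fun y => cos y * exp (y ^ 2 / 2)) = cos * fun y => exp (y ^ 2 / 2) from rfl,
        this.deriv]
      push_cast; ring
    rw [hderiv]
    refine mul_nonpos_of_nonpos_of_nonneg ?_ (exp_pos _).le
    rw [le_div_iff₀ hcos] at htan
    linarith
  have h : cos y * exp (y ^ 2 / 2) ≤ 1 := by simpa using hanti ⟨le_rfl, by positivity⟩ hy hy.1
  calc cos y = cos y * exp (y ^ 2 / 2) * exp (-y ^ 2 / 2) := by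
        rw [mul_assoc, ← exp_add, neg_div, add_neg_cancel, exp_zero, mul_one]
    _ ≤ 1 * exp (-y ^ 2 / 2) := by gcongr
    _ = exp (-y ^ 2 / 2) := one_mul _

lemma one_add_cos_div_two_le_exp {t : ℝ} (ht : |t| ≤ π) :
    (1 + cos t) / 2 ≤ exp (-t ^ 2 / 4) := by
  have hhalf : |t / 2| ≤ π / 2 := by rw [abs_div, abs_two]; linarith
  have hcos : 0 ≤ cos (t / 2) := cos_nonneg_of_neg_pi_div_two_le_of_le
    (abs_le.1 hhalf).1 (abs_le.1 hhalf).2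
  calc (1 + cos t) / 2 = cos (t / 2) ^ 2 := by rw [cos_sq, mul_div_cancel₀ t two_ne_zero]; ring
    _ ≤ exp (-(t / 2) ^ 2 / 2) ^ 2 := by gcongr; exact cos_le_exp_neg_sq_div_two hhalf
    _ = exp (-t ^ 2 / 4) := by rw [← exp_nat_mul]; ring_nf

namespace Angle

lemma norm_eq_abs_toReal (θ : Angle) : ‖θ‖ = |θ.toReal| := by
  conv_lhs => rw [← coe_toReal θ]
  exact (AddCircle.norm_coe_eq_abs_iff _ two_pi_pos.ne').2 <| by
    rw [abs_of_pos two_pi_pos]; linarith [abs_toReal_le_pi θ]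

lemma one_add_cos_div_two_nonneg (θ : Angle) : 0 ≤ (1 + cos θ) / 2 := by
  rw [← cos_toReal]; linarith [neg_one_le_cos θ.toReal]

lemma one_add_cos_div_two_le_one (θ : Angle) : (1 + cos θ) / 2 ≤ 1 := by
  rw [← cos_toReal]; linarith [Real.cos_le_one θ.toReal]

lemma one_add_cos_div_two_pow_le_exp {C : ℝ} {p : ℕ} {θ : Angle} (hC : 0 ≤ C) (hp : 0 < p)
    (hθ : C / √p ≤ |θ.toReal|) : ((1 + cos θ) / 2) ^ p ≤ exp (-C ^ 2 / 4) := by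
  have hCθ : C ^ 2 ≤ p * θ.toReal ^ 2 := by
    rw [div_le_iff₀ (by positivity)] at hθ
    calc C ^ 2 ≤ (|θ.toReal| * √p) ^ 2 := by gcongr
      _ = p * θ.toReal ^ 2 := by rw [mul_pow, sq_abs, sq_sqrt (by positivity)]; ring
  calc ((1 + cos θ) / 2) ^ p ≤ exp (-θ.toReal ^ 2 / 4) ^ p := by
        gcongr
        · exact one_add_cos_div_two_nonneg θ
        · rw [← cos_toReal]; exact one_add_cos_div_two_le_exp (abs_toReal_le_pi θ)
    _ = exp (-(p * θ.toReal ^ 2) / 4) := by rw [← exp_nat_mul]; ring_nf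
    _ ≤ exp (-C ^ 2 / 4) := by gcongr

end Angle

end Real

lemma Fintype.two_mul_sum_le_of_add_shift_le {G : Type*} [AddGroup G] [Fintype G] (s : G)
    {f : G → ℝ} {c : ℝ} (hf : ∀ x, f x + f (x + s) ≤ c) :
    2 * ∑ x, f x ≤ Fintype.card G * c := by
  have hshift : ∑ x, f (x + s) = ∑ x, f x := Equiv.sum_comp (Equiv.addRight s) f
  calc 2 * ∑ x, f x = ∑ x, (f x + f (x + s)) := by rw [Finset.sum_add_distrib, hshift]; ring
    _ ≤ ∑ _x : G, c := Finset.sum_le_sum fun x _ => hf x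
    _ = Fintype.card G * c := by rw [Finset.sum_const, nsmul_eq_mul, Finset.card_univ]

lemma residue4_add_two (L : ℕ) (h : 4 ∣ L) (x : Torus L) :
    residue4 L h (x + (2, 0)) = residue4 L h x + 2 := by
  simp only [residue4, Prod.fst_add, Prod.snd_add, map_add, map_ofNat, map_zero]
  ring

lemma inE01_add_two_iff (L : ℕ) (h : 4 ∣ L) (x : Torus L) :
    InE01 L h (x + (2, 0)) ↔ ¬ InE01 L h x := by
  simp only [InE01, residue4_add_two]
  generalize residue4 L h x = r
  revert r; decide

lemma sum_le_of_le_on_E23 (L : ℕ) [NeZero L] (h : 4 ∣ L) {b : ℝ} (w : Torus L → Fin 2 → ℝ)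
    (hw : ∀ x i, w x i ≤ 1) (hb : ∀ x i, ¬ InE01 L h x → w x i ≤ b) :
    ∑ x, ∑ i, w x i ≤ L ^ 2 * (1 + b) := by
  have hsite : ∀ x, ∑ i, w x i ≤ 2 := fun x => by
    rw [Fin.sum_univ_two]; linarith [hw x 0, hw x 1]
  have hsite_off : ∀ x, ¬ InE01 L h x → ∑ i, w x i ≤ 2 * b := fun x hx => by
    rw [Fin.sum_univ_two]; linarith [hb x 0 hx, hb x 1 hx]
  have hpair : ∀ x, ∑ i, w x i + ∑ i, w (x + (2, 0)) i ≤ 2 * (1 + b) := fun x => by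
    by_cases hx : InE01 L h x
    · linarith [hsite x, hsite_off _ fun hx' => (inE01_add_two_iff L h x).1 hx' hx]
    · linarith [hsite_off x hx, hsite (x + (2, 0))]
  have hcard : (Fintype.card (Torus L) : ℝ) = L ^ 2 := by simp [ZMod.card, sq]
  have := Fintype.two_mul_sum_le_of_add_shift_le _ hpair
  rw [hcard] at this
  linarith

/-- if every bond of `E₂₃` is `C/√p`-disordered, then the non-linear
Hamiltonian is bounded below by `−J·L²·(1 + exp(−C²/4))`, and consequently the
Boltzmann weight is bounded above by `exp(βJ·L²·(1 + exp(−C²/4)))`. -/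
theorem nl_Asharp_energy_bound (L : ℕ) (hdvd : (4 : ℕ) ∣ L) (hL : 4 ≤ L)
    (C : ℝ) (hC : 0 < C) (p : ℕ) (hp : 1 ≤ p) :
    haveI : NeZero L := ⟨by omega⟩
    ∀ φ : NLConfig L,
      (∀ x : Torus L, ∀ i : Fin 2, ¬ InE01 L hdvd x →
        C / Real.sqrt p ≤ dist (φ x) (φ (x + coordVec L i))) →
      ∀ J : ℝ, 0 < J →
        nlH L p J φ ≥ -(J * L ^ 2 * (1 + Real.exp (-(C ^ 2) / 4))) ∧
        ∀ β : ℝ, 0 ≤ β →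
          Real.exp (-β * nlH L p J φ) ≤
            Real.exp (β * J * L ^ 2 * (1 + Real.exp (-(C ^ 2) / 4))) := by
  have : NeZero L := ⟨by omega⟩
  intro φ hφ J hJ
  have hsum := sum_le_of_le_on_E23 L hdvd
    (fun x i => ((1 + Real.Angle.cos (φ x - φ (x + coordVec L i))) / 2) ^ p)
    (fun x i => pow_le_one₀ (Real.Angle.one_add_cos_div_two_nonneg _)
      (Real.Angle.one_add_cos_div_two_le_one _))
    (fun x i hx => Real.Angle.one_add_cos_div_two_pow_le_exp hC.le hp <|
      (hφ x i hx).trans_eq ((dist_eq_norm _ _).trans (Real.Angle.norm_eq_abs_toReal _)))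
  have hH : nlH L p J φ ≥ -(J * L ^ 2 * (1 + Real.exp (-(C ^ 2) / 4))) := by
    rw [nlH, ge_iff_le, neg_mul, neg_le_neg_iff, mul_assoc]
    exact mul_le_mul_of_nonneg_left hsum hJ.le
  refine ⟨hH, fun β hβ => Real.exp_le_exp.2 ?_⟩
  have := mul_le_mul_of_nonneg_left (neg_le.1 hH) hβ
  linarith
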